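/- arXiv:2602.15815 — 2 statements merged into one kernel-verified Lean document; each statement's English description precedes it below -/
import Mathlib

section
/- Let (P,Q) be a pair of probability distributions with tradeoff function τ(α) := T_α(P‖Q) (extended to ℝ by setting τ = ∞ outside [0,1]) and hockey-stick curve h(x) := H_x(P‖Q). Then h(x) = 1 + (τ⁻¹)*(−x) for all x > 0, where τ⁻¹(β) := inf{α ∈ [0,1] : τ(α) ≤ β} and g*(y) := sup_{t∈ℝ} (t·y − g(t)) denotes the convex conjugate. -/
/-!
Rejecting on `Eᶜ` is a test with type I error `1 - P E` and type II error `Q E`, so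
`τ⁻¹(Q E) ≤ 1 - P E`, which bounds `P E - x Q E` by the conjugate term at `t = Q E`.
Conversely, by the layer cake formula a randomized test `ψ` is an average of indicator tests
of its superlevel sets, so `∫ ψ dP - x ∫ ψ dQ ≤ h(x)`; applied to `ψ = 1 - φ` for a test `φ`
with errors `(α, β)` this reads `1 - α - x β ≤ h(x)`, which for `x ≥ 0` is the reverse bound.
-/
open MeasureTheory Filter Set
open scoped ENNReal NNReal

/-- Hockey-stick divergence `H_x(P‖Q) = sup_E P(E) - x Q(E)` over measurable events. -/
noncomputable def hsDiv {Ω : Type*} [MeasurableSpace Ω] (x : ℝ) (P Q : Measure Ω) : ℝ :=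
  ⨆ E : {E : Set Ω // MeasurableSet E}, ((P E).toReal - x * (Q E).toReal)

/-- Tradeoff function `T_α(P‖Q)`: the infimum of Type II errors `1 - ∫ φ dQ` over
measurable randomized tests `φ : Ω → [0,1]` with Type I error `∫ φ dP ≤ α`. -/
noncomputable def tradeoff {Ω : Type*} [MeasurableSpace Ω] (P Q : Measure Ω) (α : ℝ) : ℝ :=
  sInf {β : ℝ | ∃ φ : Ω → ℝ, Measurable φ ∧ (∀ ω, φ ω ∈ Set.Icc (0 : ℝ) 1) ∧
    (∫ ω, φ ω ∂P) ≤ α ∧ β = 1 - ∫ ω, φ ω ∂Q}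

/-- `τ⁻¹(β) = inf {α ∈ [0,1] : τ(α) ≤ β}`. -/
noncomputable def tradeoffInv {Ω : Type*} [MeasurableSpace Ω] (P Q : Measure Ω) (β : ℝ) : ℝ :=
  sInf {α : ℝ | α ∈ Set.Icc (0 : ℝ) 1 ∧ tradeoff P Q α ≤ β}

section Tests

variable {Ω : Type*} [MeasurableSpace Ω] {μ : Measure Ω} {φ : Ω → ℝ}

lemma integrable_of_mem_Icc [IsFiniteMeasure μ] (hm : Measurable φ)
    (hb : ∀ ω, φ ω ∈ Icc (0 : ℝ) 1) : Integrable φ μ :=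
  .of_bound hm.aestronglyMeasurable 1 <| .of_forall fun ω ↦ by
    rw [Real.norm_eq_abs, abs_le]
    exact ⟨by linarith [(hb ω).1], (hb ω).2⟩

lemma integral_le_measureReal_univ [IsFiniteMeasure μ] (hm : Measurable φ)
    (hb : ∀ ω, φ ω ∈ Icc (0 : ℝ) 1) : ∫ ω, φ ω ∂μ ≤ μ.real univ := by
  simpa using integral_mono (integrable_of_mem_Icc hm hb) (integrable_const 1) fun ω ↦ (hb ω).2

lemma integral_one_sub [IsProbabilityMeasure μ] (hm : Measurable φ)
    (hb : ∀ ω, φ ω ∈ Icc (0 : ℝ) 1) : ∫ ω, (1 - φ ω) ∂μ = 1 - ∫ ω, φ ω ∂μ := by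
  simp [integral_sub (integrable_const 1) (integrable_of_mem_Icc hm hb)]

lemma integrableOn_measureReal_le (μ : Measure Ω) [IsFiniteMeasure μ] (f : Ω → ℝ) (a b : ℝ) :
    IntegrableOn (fun t ↦ μ.real {ω | t ≤ f ω}) (Ioc a b) := by
  have hanti : Antitone fun t ↦ μ.real {ω | t ≤ f ω} :=
    fun s t hst ↦ measureReal_mono fun ω hω ↦ hst.trans hω
  exact (hanti.locallyIntegrable.integrableOn_isCompact isCompact_Icc).mono_set Ioc_subset_Icc_self

end Tests

section HockeyStick

variable {Ω : Type*} [MeasurableSpace Ω] {P Q : Measure Ω} [IsFiniteMeasure P] [IsFiniteMeasure Q]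

lemma hsDiv_bddAbove (x : ℝ) :
    BddAbove (range fun E : {E : Set Ω // MeasurableSet E} ↦ (P E).toReal - x * (Q E).toReal) := by
  refine ⟨P.real univ + |x| * Q.real univ, ?_⟩
  rintro _ ⟨E, rfl⟩
  have hP : P.real E ≤ P.real univ := measureReal_mono (subset_univ _)
  have hQ : Q.real E ≤ Q.real univ := measureReal_mono (subset_univ _)
  have hx : -x * Q.real E ≤ |x| * Q.real univ :=
    mul_le_mul (neg_le_abs x) hQ measureReal_nonneg (abs_nonneg x)
  simp only [← measureReal_def]
  linarith

lemma le_hsDiv (x : ℝ) {E : Set Ω} (hE : MeasurableSet E) :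
    (P E).toReal - x * (Q E).toReal ≤ hsDiv x P Q :=
  le_ciSup (hsDiv_bddAbove x) ⟨E, hE⟩

lemma integral_sub_mul_integral_le_hsDiv (x : ℝ) {φ : Ω → ℝ} (hm : Measurable φ)
    (hb : ∀ ω, φ ω ∈ Icc (0 : ℝ) 1) :
    ∫ ω, φ ω ∂P - x * ∫ ω, φ ω ∂Q ≤ hsDiv x P Q := by
  have layerCake (μ : Measure Ω) [IsFiniteMeasure μ] :
      ∫ ω, φ ω ∂μ = ∫ t in Ioc 0 1, μ.real {ω | t ≤ φ ω} :=
    (integrable_of_mem_Icc hm hb).integral_eq_integral_Ioc_meas_le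
      (.of_forall fun ω ↦ (hb ω).1) (.of_forall fun ω ↦ (hb ω).2)
  have hP := integrableOn_measureReal_le P φ 0 1
  have hQ := (integrableOn_measureReal_le Q φ 0 1).const_mul x
  rw [layerCake P, layerCake Q, ← integral_const_mul, ← integral_sub hP hQ]
  calc ∫ t in Ioc 0 1, (P.real {ω | t ≤ φ ω} - x * Q.real {ω | t ≤ φ ω})
      ≤ ∫ _ in Ioc (0 : ℝ) 1, hsDiv x P Q :=
        setIntegral_mono_on (hP.sub hQ) (integrableOn_const (by simp)) measurableSet_Ioc
          fun t _ ↦ le_hsDiv x (hm measurableSet_Ici)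
    _ = hsDiv x P Q := by simp

end HockeyStick

section Tradeoff

variable {Ω : Type*} [MeasurableSpace Ω] {P Q : Measure Ω}

lemma tradeoff_le [IsFiniteMeasure Q] {α : ℝ} {φ : Ω → ℝ} (hm : Measurable φ)
    (hb : ∀ ω, φ ω ∈ Icc (0 : ℝ) 1) (hα : ∫ ω, φ ω ∂P ≤ α) :
    tradeoff P Q α ≤ 1 - ∫ ω, φ ω ∂Q := by
  refine csInf_le ⟨1 - Q.real univ, ?_⟩ ⟨φ, hm, hb, hα, rfl⟩
  rintro _ ⟨ψ, hψm, hψb, -, rfl⟩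
  linarith [integral_le_measureReal_univ (μ := Q) hψm hψb]

lemma exists_test_of_tradeoff_lt {α b : ℝ} (hα : 0 ≤ α) (hb : tradeoff P Q α < b) :
    ∃ φ : Ω → ℝ, Measurable φ ∧ (∀ ω, φ ω ∈ Icc (0 : ℝ) 1) ∧
      ∫ ω, φ ω ∂P ≤ α ∧ 1 - ∫ ω, φ ω ∂Q < b := by
  obtain ⟨_, ⟨φ, hm, hφ, hφP, rfl⟩, hlt⟩ := exists_lt_of_csInf_lt (by
    exact ⟨1, fun _ ↦ 0, measurable_const, fun _ ↦ ⟨le_rfl, zero_le_one⟩, by simpa using hα,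
      by simp⟩) hb
  exact ⟨φ, hm, hφ, hφP, hlt⟩

lemma tradeoffInv_nonneg (β : ℝ) : 0 ≤ tradeoffInv P Q β :=
  Real.sInf_nonneg fun _ hα ↦ hα.1.1

lemma tradeoffInv_le {α β : ℝ} (hα : α ∈ Icc (0 : ℝ) 1) (hτ : tradeoff P Q α ≤ β) :
    tradeoffInv P Q β ≤ α :=
  csInf_le ⟨0, fun _ h ↦ h.1.1⟩ ⟨hα, hτ⟩

end Tradeoff

section Duality

variable {Ω : Type*} [MeasurableSpace Ω] {P Q : Measure Ω}
  [IsProbabilityMeasure P] [IsProbabilityMeasure Q]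

lemma tradeoffInv_measure_le {E : Set Ω} (hE : MeasurableSet E) :
    tradeoffInv P Q (Q E).toReal ≤ 1 - (P E).toReal := by
  have hint (μ : Measure Ω) [IsProbabilityMeasure μ] :
      ∫ ω, Eᶜ.indicator 1 ω ∂μ = 1 - (μ E).toReal := by
    rw [integral_indicator_one hE.compl, probReal_compl_eq_one_sub hE, measureReal_def]
  refine tradeoffInv_le ⟨sub_nonneg.2 measureReal_le_one, by simp⟩ ?_
  have := tradeoff_le (P := P) (Q := Q) (measurable_one.indicator hE.compl)
    (fun ω ↦ ?_) (hint P).le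
  · rwa [hint Q, sub_sub_cancel] at this
  · by_cases h : ω ∈ Eᶜ <;> simp [h]

lemma one_sub_sub_mul_le_hsDiv {x α t : ℝ} (hx : 0 ≤ x) (hα : α ∈ Icc (0 : ℝ) 1)
    (hτ : tradeoff P Q α ≤ t) : 1 - α - x * t ≤ hsDiv x P Q := by
  have hbound (b : ℝ) (htb : t < b) : 1 - α - x * b ≤ hsDiv x P Q := by
    obtain ⟨φ, hm, hφ, hφP, hφQ⟩ := exists_test_of_tradeoff_lt hα.1 (hτ.trans_lt htb)
    have h1φ : ∀ ω, 1 - φ ω ∈ Icc (0 : ℝ) 1 :=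
      fun ω ↦ ⟨by linarith [(hφ ω).2], by linarith [(hφ ω).1]⟩
    have := integral_sub_mul_integral_le_hsDiv (P := P) (Q := Q) (φ := fun ω ↦ 1 - φ ω) x
      (measurable_const.sub hm) h1φ
    rw [integral_one_sub hm hφ, integral_one_sub hm hφ] at this
    linarith [mul_le_mul_of_nonneg_left hφQ.le hx]
  have hcont : ContinuousWithinAt (fun b ↦ 1 - α - x * b) (Ioi t) t := by fun_prop
  exact le_of_tendsto hcont (eventually_nhdsWithin_of_forall hbound)

lemma one_sub_mul_sub_hsDiv_le_tradeoffInv {x t : ℝ} (hx : 0 ≤ x) (ht : 0 ≤ t) :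
    1 - x * t - hsDiv x P Q ≤ tradeoffInv P Q t := by
  have hone : tradeoff P Q 1 ≤ t := by
    have := tradeoff_le (P := P) (Q := Q) (α := 1) measurable_const
      (fun _ ↦ ⟨zero_le_one, le_rfl⟩) (by simp)
    simp only [integral_const, probReal_univ, smul_eq_mul, mul_one, sub_self] at this
    linarith
  refine le_csInf ⟨1, ⟨zero_le_one, le_rfl⟩, hone⟩ ?_
  rintro α ⟨hα, hτ⟩
  linarith [one_sub_sub_mul_le_hsDiv hx hα hτ]

end Duality

/-- `h(x) = 1 + (τ⁻¹)*(-x)`: the hockey-stick curve is determined by the convex conjugate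
of the inverse tradeoff function (the conjugate of `τ⁻¹` extended by `∞` outside `[0,1]`,
so the supremum runs over `t ∈ [0,1]`). -/
theorem stmt5 {Ω : Type*} [MeasurableSpace Ω] (P Q : Measure Ω)
    [IsProbabilityMeasure P] [IsProbabilityMeasure Q] (x : ℝ) (hx : 0 < x) :
    hsDiv x P Q = 1 + ⨆ t : Set.Icc (0 : ℝ) 1, ((t : ℝ) * (-x) - tradeoffInv P Q t) := by
  have hbdd : BddAbove (range fun t : Icc (0 : ℝ) 1 ↦ (t : ℝ) * (-x) - tradeoffInv P Q t) :=
    ⟨0, by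
      rintro _ ⟨t, rfl⟩
      linarith [mul_nonpos_of_nonneg_of_nonpos t.2.1 (neg_nonpos.2 hx.le),
        tradeoffInv_nonneg (P := P) (Q := Q) t]⟩
  refine le_antisymm (ciSup_le fun ⟨E, hE⟩ ↦ ?_) ?_
  · have hQE : (Q E).toReal ∈ Icc (0 : ℝ) 1 := ⟨by simp, measureReal_le_one⟩
    have := le_ciSup hbdd ⟨_, hQE⟩
    linarith [tradeoffInv_measure_le (P := P) (Q := Q) hE]
  · have : ⨆ t : Icc (0 : ℝ) 1, ((t : ℝ) * (-x) - tradeoffInv P Q t) ≤ hsDiv x P Q - 1 :=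
      ciSup_le fun t ↦ by
        linarith [one_sub_mul_sub_hsDiv_le_tradeoffInv (P := P) (Q := Q) hx.le t.2.1]
    linarith
end

section
/- Gap amplification for PLDs: let A, B, B₁, B₂ be privacy loss distributions such that for i ∈ {1,2}, h_{B_i}(e^{ε_i + u}) < h_B(e^{ε_i + u}) for some ε₁, ε₂ in the support of A and some u ∈ ℝ, where h_L(x) := E_{Z∼L}[max(0, 1 − x e^{-Z})]. Then with ε* := ε₁ + ε₂ + u, one has max(h_{A⊕B₁}(e^{ε*}), h_{A⊕B₂}(e^{ε*})) < h_{A⊕B}(e^{ε*}), where ⊕ denotes convolution of distributions. -/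
open MeasureTheory Filter Set
open scoped ENNReal NNReal

/-- `e^{-z}` for `z : EReal`, valued in `ℝ≥0∞` (with `e^{-∞} = 0`). -/
noncomputable def expNegE (z : EReal) : ℝ≥0∞ :=
  if z = ⊤ then 0 else if z = ⊥ then ⊤ else ENNReal.ofReal (Real.exp (-z.toReal))

/-- A privacy loss distribution: a probability measure on `ℝ ∪ {∞}` (no mass at `-∞`)
with `E[e^{-Z}] ≤ 1`. -/
def IsPLD (L : Measure EReal) : Prop :=
  IsProbabilityMeasure L ∧ L {⊥} = 0 ∧ ∫⁻ z, expNegE z ∂L ≤ 1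

/-- The integrand `max (0, 1 - x e^{-z})` for `z : EReal` (so `z = ∞` gives `1`). -/
noncomputable def hsTerm (x : ℝ) (z : EReal) : ℝ :=
  if z = ⊤ then 1 else if z = ⊥ then 0 else max 0 (1 - x * Real.exp (-z.toReal))

/-- Hockey-stick curve of a privacy loss distribution:
`h_L(x) = E_{Z∼L}[max (0, 1 - x e^{-Z})]`. -/
noncomputable def hsCurve (L : Measure EReal) (x : ℝ) : ℝ :=
  ∫ z, hsTerm x z ∂L

/-- Convolution of two distributions on the extended reals: the law of `Z₁ + Z₂` for
independent `Z₁ ∼ L₁`, `Z₂ ∼ L₂`. -/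
noncomputable def pldConv (L₁ L₂ : Measure EReal) : Measure EReal :=
  (L₁.prod L₂).map (fun p => p.1 + p.2)

/-- `ε` is in the (real) support of `A`: every neighbourhood of `ε` in `ℝ` has positive
`A`-mass. -/
def InSupp (A : Measure EReal) (ε : ℝ) : Prop :=
  ∀ δ > (0 : ℝ), 0 < A (Set.Ioo ((ε - δ : ℝ) : EReal) ((ε + δ : ℝ) : EReal))

open Topology

/-! `h_{A⊕B}(x)` is the `A`-average of `a ↦ h_B(x e^{-a})` (equal to `1` at `a = ∞`), so
domination of `B'` by `B` survives the averaging pointwise. At `x = e^{ε+η}` with `ε ∈ supp A`,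
continuity of hockey-stick curves keeps the strict gap at `e^η` for all `a` near `ε`, a set of
positive `A`-mass, so the averaged gap is strict. Apply this with `(ε, η) = (ε₂, ε₁ + u)` and
`(ε₁, ε₂ + u)`. -/

lemma hsTerm_nonneg (x : ℝ) (z : EReal) : 0 ≤ hsTerm x z := by
  unfold hsTerm; split_ifs <;> simp

lemma hsTerm_le_one {x : ℝ} (hx : 0 ≤ x) (z : EReal) : hsTerm x z ≤ 1 := by
  unfold hsTerm
  split_ifs
  · rfl
  · exact zero_le_one
  · exact max_le zero_le_one (by nlinarith [Real.exp_pos (-z.toReal)])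

lemma measurable_hsTerm (x : ℝ) : Measurable (hsTerm x) := by
  unfold hsTerm
  refine Measurable.ite (measurableSet_singleton _) measurable_const
    (Measurable.ite (measurableSet_singleton _) measurable_const ?_)
  fun_prop

lemma continuous_hsTerm_left (z : EReal) : Continuous fun x => hsTerm x z := by
  unfold hsTerm; split_ifs <;> fun_prop

lemma integrable_hsTerm {L : Measure EReal} [IsFiniteMeasure L] {x : ℝ} (hx : 0 ≤ x) :
    Integrable (hsTerm x) L :=
  (integrable_const (1 : ℝ)).mono' (measurable_hsTerm x).aestronglyMeasurable
    (ae_of_all _ fun z => by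
      rw [Real.norm_of_nonneg (hsTerm_nonneg x z)]; exact hsTerm_le_one hx z)

lemma continuousOn_hsCurve (L : Measure EReal) [IsFiniteMeasure L] :
    ContinuousOn (hsCurve L) (Ici 0) :=
  continuousOn_of_dominated (fun x _ => (measurable_hsTerm x).aestronglyMeasurable)
    (fun x hx => ae_of_all _ fun z => by
      rw [Real.norm_of_nonneg (hsTerm_nonneg x z)]; exact hsTerm_le_one hx z)
    (integrable_const 1) (ae_of_all _ fun z => (continuous_hsTerm_left z).continuousOn)

lemma continuous_hsCurve_mul_exp_neg (L : Measure EReal) [IsFiniteMeasure L] {x : ℝ}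
    (hx : 0 ≤ x) : Continuous fun a => hsCurve L (x * Real.exp (-a)) :=
  (continuousOn_hsCurve L).comp_continuous (by fun_prop) fun _ => mem_Ici.2 (by positivity)

lemma hsTerm_coe_add (x a : ℝ) (b : EReal) :
    hsTerm x (a + b) = hsTerm (x * Real.exp (-a)) b := by
  induction b using EReal.rec with
  | bot => simp [hsTerm]
  | top => simp [hsTerm]
  | coe b =>
    simp only [hsTerm, ← EReal.coe_add, EReal.coe_ne_top, EReal.coe_ne_bot, if_false,
      EReal.toReal_coe, neg_add, Real.exp_add, mul_assoc]

lemma hsTerm_top_add (x : ℝ) {b : EReal} (hb : b ≠ ⊥) : hsTerm x (⊤ + b) = 1 := by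
  rw [EReal.top_add_of_ne_bot hb]; simp [hsTerm]

lemma integral_hsTerm_coe_add (L : Measure EReal) (x a : ℝ) :
    ∫ b, hsTerm x (a + b) ∂L = hsCurve L (x * Real.exp (-a)) := by
  simp only [hsTerm_coe_add, hsCurve]

lemma integral_hsTerm_top_add {L : Measure EReal} [IsProbabilityMeasure L] (hL : L {⊥} = 0)
    (x : ℝ) : ∫ b, hsTerm x (⊤ + b) ∂L = 1 := by
  have h : (fun b => hsTerm x (⊤ + b)) =ᵐ[L] fun _ => 1 := by
    filter_upwards [measure_eq_zero_iff_ae_notMem.1 hL] with b hb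
    exact hsTerm_top_add x hb
  simp [integral_congr_ae h]

lemma integral_hsTerm_add_mono {L L' : Measure EReal} [IsProbabilityMeasure L]
    [IsProbabilityMeasure L'] (hL : L {⊥} = 0) (hL' : L' {⊥} = 0)
    (hdom : ∀ x > (0 : ℝ), hsCurve L' x ≤ hsCurve L x) {x : ℝ} (hx : 0 < x) (a : EReal) :
    ∫ b, hsTerm x (a + b) ∂L' ≤ ∫ b, hsTerm x (a + b) ∂L := by
  induction a using EReal.rec with
  | bot => simp [hsTerm]
  | top => rw [integral_hsTerm_top_add hL', integral_hsTerm_top_add hL]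
  | coe a =>
    rw [integral_hsTerm_coe_add, integral_hsTerm_coe_add]
    exact hdom _ (by positivity)

lemma integrable_hsTerm_add (A L : Measure EReal) [IsFiniteMeasure A] [IsFiniteMeasure L]
    {x : ℝ} (hx : 0 ≤ x) :
    Integrable (fun p : EReal × EReal => hsTerm x (p.1 + p.2)) (A.prod L) :=
  (integrable_map_measure (measurable_hsTerm x).aestronglyMeasurable
    measurable_add.aemeasurable).1 (integrable_hsTerm hx)

lemma integrable_integral_hsTerm_add (A L : Measure EReal) [IsFiniteMeasure A]
    [IsFiniteMeasure L] {x : ℝ} (hx : 0 ≤ x) :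
    Integrable (fun a => ∫ b, hsTerm x (a + b) ∂L) A :=
  (integrable_hsTerm_add A L hx).integral_prod_left

lemma hsCurve_pldConv (A L : Measure EReal) [IsFiniteMeasure A] [IsFiniteMeasure L] {x : ℝ}
    (hx : 0 ≤ x) : hsCurve (pldConv A L) x = ∫ a, ∫ b, hsTerm x (a + b) ∂L ∂A := by
  rw [hsCurve, pldConv, integral_map measurable_add.aemeasurable
    (measurable_hsTerm x).aestronglyMeasurable, integral_prod _ (integrable_hsTerm_add A L hx)]

lemma InSupp.integral_pos {A : Measure EReal} {f : EReal → ℝ} (hf : 0 ≤ f)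
    (hfi : Integrable f A) {ε : ℝ} (hε : InSupp A ε) (hpos : ∀ᶠ a : ℝ in 𝓝 ε, 0 < f a) :
    0 < ∫ a, f a ∂A := by
  obtain ⟨δ, hδ, hball⟩ := Metric.eventually_nhds_iff.1 hpos
  refine (integral_pos_iff_support_of_nonneg hf hfi).2 ((hε δ hδ).trans_le (measure_mono ?_))
  intro a ⟨hlo, hhi⟩
  lift a to ℝ using ⟨hhi.trans_le le_top |>.ne, (bot_le.trans_lt hlo).ne'⟩
  rw [EReal.coe_lt_coe_iff] at hlo hhi
  exact (hball (abs_sub_lt_iff.2 ⟨by linarith, by linarith⟩)).ne'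

lemma hsCurve_pldConv_lt_of_inSupp (A B B' : Measure EReal) [IsFiniteMeasure A]
    [IsProbabilityMeasure B] [IsProbabilityMeasure B'] (hB : B {⊥} = 0) (hB' : B' {⊥} = 0)
    (hdom : ∀ x > (0 : ℝ), hsCurve B' x ≤ hsCurve B x) {ε η : ℝ} (hε : InSupp A ε)
    (hgap : hsCurve B' (Real.exp η) < hsCurve B (Real.exp η)) :
    hsCurve (pldConv A B') (Real.exp (ε + η)) < hsCurve (pldConv A B) (Real.exp (ε + η)) := by
  set x := Real.exp (ε + η)
  have hx : 0 < x := Real.exp_pos _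
  have hxε : x * Real.exp (-ε) = Real.exp η := by rw [← Real.exp_add]; ring_nf
  have hB_int := integrable_integral_hsTerm_add A B hx.le
  have hB'_int := integrable_integral_hsTerm_add A B' hx.le
  rw [hsCurve_pldConv A B' hx.le, hsCurve_pldConv A B hx.le, ← sub_pos,
    ← integral_sub hB_int hB'_int]
  refine hε.integral_pos (fun a => sub_nonneg.2 (integral_hsTerm_add_mono hB hB' hdom hx a))
    (hB_int.sub hB'_int) ?_
  have hgap_near := (continuous_hsCurve_mul_exp_neg B' hx.le).continuousAt.eventually_lt
    (continuous_hsCurve_mul_exp_neg B hx.le).continuousAt (by rwa [hxε])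
  filter_upwards [hgap_near] with a ha
  rw [integral_hsTerm_coe_add, integral_hsTerm_coe_add]
  exact sub_pos.2 ha

/-- Gap amplification for PLDs: if `B₁, B₂` are dominated by `B` with a strict
hockey-stick gap at `e^{ε₁+u}` and `e^{ε₂+u}` respectively, where `ε₁, ε₂ ∈ supp A`,
then at `ε* = ε₁ + ε₂ + u`,
`max (h_{A⊕B₁}(e^{ε*}), h_{A⊕B₂}(e^{ε*})) < h_{A⊕B}(e^{ε*})`. -/
theorem stmt14 (A B B₁ B₂ : Measure EReal)
    (hA : IsPLD A) (hB : IsPLD B) (hB₁ : IsPLD B₁) (hB₂ : IsPLD B₂)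
    (hdom₁ : ∀ x > (0 : ℝ), hsCurve B₁ x ≤ hsCurve B x)
    (hdom₂ : ∀ x > (0 : ℝ), hsCurve B₂ x ≤ hsCurve B x)
    (ε₁ ε₂ u : ℝ) (hε₁ : InSupp A ε₁) (hε₂ : InSupp A ε₂)
    (hgap₁ : hsCurve B₁ (Real.exp (ε₁ + u)) < hsCurve B (Real.exp (ε₁ + u)))
    (hgap₂ : hsCurve B₂ (Real.exp (ε₂ + u)) < hsCurve B (Real.exp (ε₂ + u))) :
    max (hsCurve (pldConv A B₁) (Real.exp (ε₁ + ε₂ + u)))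
        (hsCurve (pldConv A B₂) (Real.exp (ε₁ + ε₂ + u))) <
      hsCurve (pldConv A B) (Real.exp (ε₁ + ε₂ + u)) := by
  have := hA.1; have := hB.1; have := hB₁.1; have := hB₂.1
  have gap₁ := hsCurve_pldConv_lt_of_inSupp A B B₁ hB.2.1 hB₁.2.1 hdom₁ hε₂ hgap₁
  have gap₂ := hsCurve_pldConv_lt_of_inSupp A B B₂ hB.2.1 hB₂.2.1 hdom₂ hε₁ hgap₂
  rw [← add_assoc, add_comm ε₂] at gap₁
  rw [← add_assoc] at gap₂
  exact max_lt gap₁ gap₂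
end
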